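/- Let f : ℝⁿ → ℝ be continuously differentiable with ∇f bounded and Lipschitz. For x, y ∈ ℝⁿ and t > 0, let U_t(x,y) denote the set of Lipschitz paths γ : [0,t] → ℝⁿ with γ(0) = x and γ(t) = y, and define d_A(x,y) := (1/2) · inf{ ∫₀^1 |∇f(γ(s))| · |γ'(s)| ds : γ ∈ U_1(x,y) } and ρ(x,y,t) := (1/4) · inf{ ∫₀^t (|γ'(s)|² + |∇f(γ(s))|²) ds : γ ∈ U_t(x,y) }. Then d_A(x,y) = inf_{t>0} ρ(x,y,t) for all x, y ∈ ℝⁿ. If moreover ∇f(y) = 0, then t ↦ ρ(x,y,t) is nonincreasing on (0,∞), and consequently d_A(x,y) = lim_{t→+∞} ρ(x,y,t). -/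

import Mathlib

/-!
Rescaling a path on `[0, t]` to `[0, 1]` and `2ab ≤ a² + b²` give `d_A ≤ ρ(x, y, t)`.
Conversely, replace a path `γ` on `[0, 1]` by the polygon through the points `γ (i / m)` and
run each segment `[p, q]` at the speed `≈ |∇f(p)|` that balances the two terms of the action.
Since `∇f` is Lipschitz, a segment costs `2 |q - p| |∇f(p)|` up to `O(1/m²)`, which is twice the
Agmon length of the corresponding piece of `γ` up to `O(1/m²)`; summing, the polygon costs
`2 ∫ |∇f(γ)| |γ'| + O(1/m)`. When `∇f(y) = 0`, a path ending at `y` can be prolonged by the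
constant path at `y` at no cost, so `ρ(x, y, ·)` is nonincreasing and tends to its infimum.
-/

open MeasureTheory

/-- The finite-time action `ρ(x,y,t)` associated with the potential `|∇f|²`. -/
noncomputable def rho6 (n : ℕ) (f : EuclideanSpace ℝ (Fin n) → ℝ)
    (x y : EuclideanSpace ℝ (Fin n)) (t : ℝ) : ℝ :=
  (1/4) * sInf { I : ℝ | ∃ γ : ℝ → EuclideanSpace ℝ (Fin n),
      (∃ K, LipschitzWith K γ) ∧ γ 0 = x ∧ γ t = y ∧
      I = ∫ s in (0:ℝ)..t, (‖deriv γ s‖^2 + ‖gradient f (γ s)‖^2) }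

/-- The Agmon distance at the bottom energy of the potential `|∇f|²/4`. -/
noncomputable def dA6 (n : ℕ) (f : EuclideanSpace ℝ (Fin n) → ℝ)
    (x y : EuclideanSpace ℝ (Fin n)) : ℝ :=
  (1/2) * sInf { I : ℝ | ∃ γ : ℝ → EuclideanSpace ℝ (Fin n),
      (∃ K, LipschitzWith K γ) ∧ γ 0 = x ∧ γ 1 = y ∧
      I = ∫ s in (0:ℝ)..1, ‖gradient f (γ s)‖ * ‖deriv γ s‖ }

open Set Filter intervalIntegral
open scoped NNReal Topology

theorem exists_lipschitz_path {E : Type*} [NormedAddCommGroup E] [NormedSpace ℝ E] (x y : E)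
    {t : ℝ} (ht : t ≠ 0) : ∃ γ : ℝ → E, (∃ K, LipschitzWith K γ) ∧ γ 0 = x ∧ γ t = y :=
  ⟨fun s => AffineMap.lineMap x y (t⁻¹ * s),
    ⟨_, (lipschitzWith_lineMap x y).comp (lipschitzWith_smul t⁻¹)⟩, by simp, by simp [ht]⟩

theorem exists_pos_sq_div_add_mul_sq_le {L B δ : ℝ} (hL : 0 ≤ L) (hB : 0 ≤ B) (hδ : 0 < δ) :
    ∃ t > 0, L ^ 2 / t + t * B ^ 2 ≤ 2 * L * B + δ := by
  -- the optimal time `L / B`, with `L` and `B` shifted by `η` so that `L = 0` or `B = 0` is fine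
  set η := δ / (L + B + 1)
  have hη : 0 < η := by positivity
  have hηδ : η * (L + B) ≤ δ := by
    rw [div_mul_eq_mul_div, div_le_iff₀ (by positivity)]; nlinarith
  refine ⟨(L + η) / (B + η), by positivity, ?_⟩
  have h₁ : L ^ 2 / ((L + η) / (B + η)) ≤ L * (B + η) := by
    rw [div_div_eq_mul_div, div_le_iff₀ (by positivity)]
    nlinarith [mul_nonneg (mul_nonneg hL hη.le) (add_nonneg hB hη.le)]
  have h₂ : (L + η) / (B + η) * B ^ 2 ≤ B * (L + η) := by
    rw [div_mul_eq_mul_div, div_le_iff₀ (by positivity)]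
    nlinarith [mul_nonneg (mul_nonneg hB hη.le) (add_nonneg hL hη.le)]
  nlinarith

theorem AntitoneOn.tendsto_atTop_of_isGLB {α β : Type*} [Preorder α] [NoMaxOrder α]
    [LinearOrder β] [TopologicalSpace β] [OrderTopology β] {g : α → β} {a : α} {L : β}
    (hg : AntitoneOn g (Ioi a)) (hL : IsGLB (g '' Ioi a) L) : Tendsto g atTop (𝓝 L) := by
  refine tendsto_order.2 ⟨fun b hb => ?_, fun b hb => ?_⟩
  · filter_upwards [Ioi_mem_atTop a] with t ht using hb.trans_le (hL.1 ⟨t, ht, rfl⟩)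
  · obtain ⟨_, ⟨t₀, ht₀, rfl⟩, hlt⟩ := (isGLB_lt_iff hL).1 hb
    filter_upwards [Ici_mem_atTop t₀] with t ht
    exact (hg ht₀ (lt_of_lt_of_le ht₀ ht) ht).trans_lt hlt

section Lipschitz

variable {E : Type*} [NormedAddCommGroup E] [NormedSpace ℝ E] [CompleteSpace E]
  {γ : ℝ → E} {K : ℝ≥0}

theorem LipschitzWith.intervalIntegrable_norm_deriv_pow (hγ : LipschitzWith K γ) (k : ℕ)
    (a b : ℝ) : IntervalIntegrable (fun s => ‖deriv γ s‖ ^ k) volume a b := by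
  refine (intervalIntegrable_const (c := (K : ℝ) ^ k)).mono_fun'
    ((stronglyMeasurable_deriv γ).norm.pow k).aestronglyMeasurable (ae_of_all _ fun s => ?_)
  simp only [norm_pow, norm_norm]
  exact pow_le_pow_left₀ (norm_nonneg _) (norm_deriv_le_of_lipschitz hγ) k

theorem LipschitzWith.intervalIntegrable_norm_deriv (hγ : LipschitzWith K γ) (a b : ℝ) :
    IntervalIntegrable (fun s => ‖deriv γ s‖) volume a b := by
  simpa using hγ.intervalIntegrable_norm_deriv_pow 1 a b

theorem LipschitzWith.norm_sub_le_integral_norm_deriv [FiniteDimensional ℝ E]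
    (hγ : LipschitzWith K γ) {a b : ℝ} (hab : a ≤ b) :
    ‖γ b - γ a‖ ≤ ∫ s in a..b, ‖deriv γ s‖ := by
  obtain ⟨g, hg, hgv⟩ := exists_dual_vector'' ℝ (γ b - γ a)
  have hgγ : LipschitzWith (‖g‖₊ * K) (g ∘ γ) := g.lipschitz.comp hγ
  have hderiv : ∫ s in a..b, deriv (g ∘ γ) s = ∫ s in a..b, g (deriv γ s) :=
    integral_congr_ae <| by
      filter_upwards [hγ.ae_differentiableAt_real] with s hs _
      exact (g.hasFDerivAt.comp_hasDerivAt s hs.hasDerivAt).deriv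
  have hint : IntervalIntegrable (deriv γ) volume a b :=
    (hγ.intervalIntegrable_norm_deriv a b).mono_fun'
      (stronglyMeasurable_deriv γ).aestronglyMeasurable
      (ae_of_all _ fun s => le_rfl)
  calc ‖γ b - γ a‖ = g (γ b) - g (γ a) := by rw [← map_sub, hgv]; rfl
    _ = g (∫ s in a..b, deriv γ s) := by
      rw [← g.intervalIntegral_comp_comm hint, ← hderiv,
        hgγ.lipschitzOnWith.absolutelyContinuousOnInterval.integral_deriv_eq_sub]
      rfl
    _ ≤ ‖∫ s in a..b, deriv γ s‖ :=
      (le_abs_self _).trans ((g.le_opNorm _).trans (mul_le_of_le_one_left (norm_nonneg _) hg))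
    _ ≤ ∫ s in a..b, ‖deriv γ s‖ := norm_integral_le_integral_norm hab

end Lipschitz

namespace Agmon

section Action

variable {E : Type*} [NormedAddCommGroup E] [InnerProductSpace ℝ E] [CompleteSpace E]
  {f : E → ℝ}

noncomputable def action (f : E → ℝ) (γ : ℝ → E) (a b : ℝ) : ℝ :=
  ∫ s in a..b, (‖deriv γ s‖ ^ 2 + ‖gradient f (γ s)‖ ^ 2)

noncomputable def agmonLength (f : E → ℝ) (γ : ℝ → E) (a b : ℝ) : ℝ :=
  ∫ s in a..b, ‖gradient f (γ s)‖ * ‖deriv γ s‖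

theorem action_nonneg (f : E → ℝ) (γ : ℝ → E) {a b : ℝ} (hab : a ≤ b) : 0 ≤ action f γ a b :=
  integral_nonneg hab fun _ _ => by positivity

theorem agmonLength_nonneg (f : E → ℝ) (γ : ℝ → E) {a b : ℝ} (hab : a ≤ b) :
    0 ≤ agmonLength f γ a b :=
  integral_nonneg hab fun _ _ => by positivity

theorem agmonLength_comp_mul_left (γ : ℝ → E) {c : ℝ} (hc : 0 < c) (a b : ℝ) :
    agmonLength f (fun s => γ (c * s)) a b = agmonLength f γ (c * a) (c * b) := by
  have hpt : ∀ s, ‖gradient f (γ (c * s))‖ * ‖deriv (fun s => γ (c * s)) s‖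
      = c * (‖gradient f (γ (c * s))‖ * ‖deriv γ (c * s)‖) := fun s => by
    rw [deriv_comp_mul_left, norm_smul, Real.norm_of_nonneg hc.le]; ring
  rw [agmonLength, agmonLength, integral_congr fun s _ => hpt s,
    intervalIntegral.integral_const_mul,
    integral_comp_mul_left (fun s => ‖gradient f (γ s)‖ * ‖deriv γ s‖) hc.ne', smul_eq_mul,
    mul_inv_cancel_left₀ hc.ne']

theorem action_comp_sub_const (γ : ℝ → E) (a b c : ℝ) :
    action f (fun s => γ (s - c)) (a + c) (b + c) = action f γ a b := by
  simp only [action, deriv_comp_sub_const]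
  rw [integral_comp_sub_right (fun s => ‖deriv γ s‖ ^ 2 + ‖gradient f (γ s)‖ ^ 2)]
  simp

theorem action_congr_of_eqOn {η γ : ℝ → E} {a b : ℝ} (hab : a ≤ b) (h : EqOn η γ (Ioo a b)) :
    action f η a b = action f γ a b := by
  have hderiv := h.deriv isOpen_Ioo
  refine integral_congr_ae ?_
  filter_upwards [Measure.ae_ne volume b] with s hsb hs
  rw [uIoc_of_le hab] at hs
  have hs' : s ∈ Ioo a b := ⟨hs.1, lt_of_le_of_ne hs.2 hsb⟩
  rw [hderiv hs', h hs']

variable (hf : Continuous (gradient f))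
include hf

theorem intervalIntegrable_action_integrand {γ : ℝ → E} {K : ℝ≥0} (hγ : LipschitzWith K γ)
    (a b : ℝ) :
    IntervalIntegrable (fun s => ‖deriv γ s‖ ^ 2 + ‖gradient f (γ s)‖ ^ 2) volume a b :=
  (hγ.intervalIntegrable_norm_deriv_pow 2 a b).add
    (((hf.comp hγ.continuous).norm.pow 2).intervalIntegrable a b)

theorem intervalIntegrable_agmon_integrand {γ : ℝ → E} {K : ℝ≥0} (hγ : LipschitzWith K γ)
    (a b : ℝ) :
    IntervalIntegrable (fun s => ‖gradient f (γ s)‖ * ‖deriv γ s‖) volume a b :=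
  (hγ.intervalIntegrable_norm_deriv a b).continuousOn_mul
    (hf.comp hγ.continuous).norm.continuousOn

theorem action_add_adjacent {γ : ℝ → E} {K : ℝ≥0} (hγ : LipschitzWith K γ) (a b c : ℝ) :
    action f γ a b + action f γ b c = action f γ a c :=
  integral_add_adjacent_intervals (intervalIntegrable_action_integrand hf hγ a b)
    (intervalIntegrable_action_integrand hf hγ b c)

theorem two_mul_agmonLength_le_action {γ : ℝ → E} {K : ℝ≥0} (hγ : LipschitzWith K γ)
    {a b : ℝ} (hab : a ≤ b) : 2 * agmonLength f γ a b ≤ action f γ a b := by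
  rw [agmonLength, ← intervalIntegral.integral_const_mul]
  refine integral_mono_on hab ((intervalIntegrable_agmon_integrand hf hγ a b).const_mul 2)
    (intervalIntegrable_action_integrand hf hγ a b) fun s _ => ?_
  linarith [two_mul_le_add_sq ‖deriv γ s‖ ‖gradient f (γ s)‖]

theorem exists_action_eq_add_of_concat {γ₁ γ₂ : ℝ → E} {K₁ K₂ : ℝ≥0}
    (h₁ : LipschitzWith K₁ γ₁) (h₂ : LipschitzWith K₂ γ₂) {t₁ t₂ : ℝ} (ht₁ : 0 ≤ t₁)
    (ht₂ : 0 ≤ t₂) (hjoin : γ₁ t₁ = γ₂ 0) :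
    ∃ η : ℝ → E, (∃ K, LipschitzWith K η) ∧ η 0 = γ₁ 0 ∧ η (t₁ + t₂) = γ₂ t₂ ∧
      action f η 0 (t₁ + t₂) = action f γ₁ 0 t₁ + action f γ₂ 0 t₂ := by
  -- no case split: this is Lipschitz as a sum of Lipschitz maps
  set η : ℝ → E := fun s => γ₁ (min s t₁) + (γ₂ (max (s - t₁) 0) - γ₂ 0)
  have hη : LipschitzWith _ η := (h₁.comp (LipschitzWith.id.min_const t₁)).add
    ((h₂.comp ((LipschitzWith.id.sub (LipschitzWith.const t₁)).max_const 0)).sub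
      (LipschitzWith.const (γ₂ 0)))
  have hη₁ : EqOn η γ₁ (Iic t₁) := fun s hs => by
    simp [η, min_eq_left (mem_Iic.1 hs), max_eq_right (sub_nonpos.2 (mem_Iic.1 hs))]
  have hη₂ : EqOn η (fun s => γ₂ (s - t₁)) (Ici t₁) := fun s hs => by
    simp [η, min_eq_right (mem_Ici.1 hs), max_eq_left (sub_nonneg.2 (mem_Ici.1 hs)), hjoin]
  refine ⟨η, ⟨_, hη⟩, hη₁ (mem_Iic.2 ht₁),
    by simpa using hη₂ (mem_Ici.2 (le_add_of_nonneg_right ht₂)), ?_⟩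
  rw [← action_add_adjacent hf hη 0 t₁,
    action_congr_of_eqOn ht₁ (hη₁.mono fun s hs => le_of_lt hs.2),
    action_congr_of_eqOn (by linarith) (hη₂.mono fun s hs => le_of_lt hs.1),
    ← action_comp_sub_const γ₂ 0 t₂ t₁, zero_add, add_comm t₂]

end Action

section InfAction

variable {E : Type*} [NormedAddCommGroup E] [InnerProductSpace ℝ E] [CompleteSpace E]
  {f : E → ℝ}

def actionValues (f : E → ℝ) (x y : E) (t : ℝ) : Set ℝ :=
  {I | ∃ γ : ℝ → E, (∃ K, LipschitzWith K γ) ∧ γ 0 = x ∧ γ t = y ∧ I = action f γ 0 t}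

def agmonValues (f : E → ℝ) (x y : E) : Set ℝ :=
  {I | ∃ γ : ℝ → E, (∃ K, LipschitzWith K γ) ∧ γ 0 = x ∧ γ 1 = y ∧ I = agmonLength f γ 0 1}

def InfActionLE (f : E → ℝ) (x y : E) (c : ℝ) : Prop :=
  ∀ δ > 0, ∃ t > 0, ∃ I ∈ actionValues f x y t, I ≤ c + δ

theorem InfActionLE.mono {x y : E} {c c' : ℝ} (h : InfActionLE f x y c) (hc : c ≤ c') :
    InfActionLE f x y c' := fun δ hδ =>
  let ⟨t, ht, I, hI, hle⟩ := h δ hδ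
  ⟨t, ht, I, hI, by linarith⟩

theorem InfActionLE.of_forall_pos {x y : E} {c : ℝ} (h : ∀ ε > 0, InfActionLE f x y (c + ε)) :
    InfActionLE f x y c := fun δ hδ =>
  let ⟨t, ht, I, hI, hle⟩ := h (δ / 2) (half_pos hδ) (δ / 2) (half_pos hδ)
  ⟨t, ht, I, hI, by linarith⟩

theorem InfActionLE.trans (hf : Continuous (gradient f)) {x y z : E} {c₁ c₂ : ℝ}
    (h₁ : InfActionLE f x y c₁) (h₂ : InfActionLE f y z c₂) : InfActionLE f x z (c₁ + c₂) := by
  intro δ hδ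
  obtain ⟨t₁, ht₁, _, ⟨γ₁, ⟨K₁, hγ₁⟩, h₁0, h₁t, rfl⟩, hle₁⟩ := h₁ (δ / 2) (half_pos hδ)
  obtain ⟨t₂, ht₂, _, ⟨γ₂, ⟨K₂, hγ₂⟩, h₂0, h₂t, rfl⟩, hle₂⟩ := h₂ (δ / 2) (half_pos hδ)
  obtain ⟨η, hη, hη0, hηt, hact⟩ :=
    exists_action_eq_add_of_concat hf hγ₁ hγ₂ ht₁.le ht₂.le (h₁t.trans h₂0.symm)
  exact ⟨t₁ + t₂, by positivity, _, ⟨η, hη, hη0.trans h₁0, hηt.trans h₂t, rfl⟩,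
    by rw [hact]; linarith⟩

theorem InfActionLE.sum_range (hf : Continuous (gradient f)) {p : ℕ → E} {c : ℕ → ℝ} {m : ℕ}
    (hm : 0 < m) (h : ∀ i < m, InfActionLE f (p i) (p (i + 1)) (c i)) :
    InfActionLE f (p 0) (p m) (∑ i ∈ Finset.range m, c i) := by
  induction m, hm using Nat.le_induction with
  | base => simpa using h 0 one_pos
  | succ m hm ih =>
    rw [Finset.sum_range_succ]
    exact (ih fun i hi => h i (by omega)).trans hf (h m (by omega))

theorem action_lineMap_le {ℓ : ℝ≥0} (hl : LipschitzWith ℓ (gradient f)) (p q : E) {t : ℝ}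
    (ht : 0 < t) :
    action f (fun s => AffineMap.lineMap p q (t⁻¹ * s)) 0 t
      ≤ ‖q - p‖ ^ 2 / t + t * (‖gradient f p‖ + ℓ * ‖q - p‖) ^ 2 := by
  set σ : ℝ → E := fun s => AffineMap.lineMap p q (t⁻¹ * s)
  have hσ : LipschitzWith _ σ := (lipschitzWith_lineMap p q).comp (lipschitzWith_smul t⁻¹)
  have hderiv : ∀ s, deriv σ s = t⁻¹ • (q - p) := fun s => by
    rw [deriv_comp_mul_left, AffineMap.hasDerivAt_lineMap.deriv]
  have hgrad : ∀ s ∈ Icc 0 t, ‖gradient f (σ s)‖ ≤ ‖gradient f p‖ + ℓ * ‖q - p‖ := by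
    intro s hs
    have hdist : dist (σ s) p ≤ ‖q - p‖ := by
      rw [dist_lineMap_left, dist_eq_norm',
        Real.norm_of_nonneg (mul_nonneg (inv_nonneg.2 ht.le) hs.1)]
      exact mul_le_of_le_one_left (norm_nonneg _) (by rw [inv_mul_le_one₀ ht]; exact hs.2)
    calc ‖gradient f (σ s)‖ ≤ ‖gradient f p‖ + dist (gradient f (σ s)) (gradient f p) := by
          rw [dist_eq_norm]; exact norm_le_norm_add_norm_sub' _ _
      _ ≤ ‖gradient f p‖ + ℓ * ‖q - p‖ := by gcongr; exact (hl.dist_le_mul _ _).trans (by gcongr)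
  calc action f σ 0 t
      ≤ ∫ _ in (0:ℝ)..t, (‖q - p‖ ^ 2 / t ^ 2 + (‖gradient f p‖ + ℓ * ‖q - p‖) ^ 2) := by
        refine integral_mono_on ht.le (intervalIntegrable_action_integrand hl.continuous hσ 0 t)
          intervalIntegrable_const fun s hs => ?_
        rw [hderiv, norm_smul, norm_inv, Real.norm_of_nonneg ht.le, mul_pow, inv_pow,
          inv_mul_eq_div]
        gcongr
        exact hgrad s hs
    _ = _ := by rw [intervalIntegral.integral_const, smul_eq_mul, sub_zero]; field_simp

theorem infActionLE_segment {ℓ : ℝ≥0} (hl : LipschitzWith ℓ (gradient f)) (p q : E) :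
    InfActionLE f p q (2 * ‖q - p‖ * (‖gradient f p‖ + ℓ * ‖q - p‖)) := by
  intro δ hδ
  obtain ⟨t, ht, hle⟩ := exists_pos_sq_div_add_mul_sq_le (norm_nonneg (q - p))
    (by positivity : 0 ≤ ‖gradient f p‖ + ℓ * ‖q - p‖) hδ
  refine ⟨t, ht, _, ⟨_, ⟨_, (lipschitzWith_lineMap p q).comp (lipschitzWith_smul t⁻¹)⟩,
    by simp, by simp [ht.ne'], rfl⟩, (action_lineMap_le hl p q ht).trans ?_⟩
  linarith

end InfAction

section Polygon

variable {E : Type*} [NormedAddCommGroup E] [InnerProductSpace ℝ E] [FiniteDimensional ℝ E]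
  {f : E → ℝ} {ℓ : ℝ≥0} (hl : LipschitzWith ℓ (gradient f)) {γ : ℝ → E} {K : ℝ≥0}
  (hγ : LipschitzWith K γ)
include hl hγ

theorem norm_sub_mul_le_agmonLength {a b : ℝ} (hab : a ≤ b) :
    ‖γ b - γ a‖ * (‖gradient f (γ a)‖ + ℓ * ‖γ b - γ a‖)
      ≤ agmonLength f γ a b + 2 * ℓ * K ^ 2 * (b - a) ^ 2 := by
  set L := ‖γ b - γ a‖
  set V := ‖gradient f (γ a)‖
  set J := ∫ s in a..b, ‖deriv γ s‖
  set r := (ℓ : ℝ) * K * (b - a)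
  have hLK : L ≤ K * (b - a) := by
    simpa [L, dist_eq_norm, Real.dist_eq, abs_of_nonneg (sub_nonneg.2 hab)] using
      hγ.dist_le_mul b a
  have hJK : J ≤ K * (b - a) := by
    calc J ≤ ∫ _ in a..b, (K : ℝ) := integral_mono_on hab (hγ.intervalIntegrable_norm_deriv a b)
          intervalIntegrable_const fun s _ => norm_deriv_le_of_lipschitz hγ
      _ = K * (b - a) := by rw [intervalIntegral.integral_const, smul_eq_mul, mul_comm]
  have hV : ∀ s ∈ Icc a b, V ≤ ‖gradient f (γ s)‖ + r := by
    intro s hs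
    have hγs : dist (γ a) (γ s) ≤ K * (b - a) := by
      refine (hγ.dist_le_mul a s).trans (by gcongr; rw [Real.dist_eq, abs_le]; constructor <;>
        linarith [hs.1, hs.2])
    calc V ≤ ‖gradient f (γ s)‖ + dist (gradient f (γ a)) (gradient f (γ s)) := by
          rw [dist_eq_norm]; exact norm_le_norm_add_norm_sub' _ _
      _ ≤ ‖gradient f (γ s)‖ + r := by
          gcongr; exact (hl.dist_le_mul _ _).trans (by simp only [r, mul_assoc]; gcongr)
  have hVJ : V * J ≤ agmonLength f γ a b + r * J := by
    rw [agmonLength, ← intervalIntegral.integral_const_mul, ← intervalIntegral.integral_const_mul,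
      ← integral_add (intervalIntegrable_agmon_integrand hl.continuous hγ a b)
        ((hγ.intervalIntegrable_norm_deriv a b).const_mul r)]
    refine integral_mono_on hab ((hγ.intervalIntegrable_norm_deriv a b).const_mul V)
      ((intervalIntegrable_agmon_integrand hl.continuous hγ a b).add
        ((hγ.intervalIntegrable_norm_deriv a b).const_mul r)) fun s hs => ?_
    nlinarith [mul_le_mul_of_nonneg_right (hV s hs) (norm_nonneg (deriv γ s))]
  have hLJ : L ≤ J := hγ.norm_sub_le_integral_norm_deriv hab
  calc L * (V + ℓ * L) = V * L + ℓ * L * L := by ring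
    _ ≤ V * J + ℓ * (K * (b - a)) * (K * (b - a)) := by gcongr
    _ ≤ agmonLength f γ a b + r * (K * (b - a)) + ℓ * (K * (b - a)) * (K * (b - a)) := by
        gcongr
        exact hVJ.trans (by gcongr)
    _ = agmonLength f γ a b + 2 * ℓ * K ^ 2 * (b - a) ^ 2 := by ring

theorem infActionLE_two_mul_agmonLength_add {m : ℕ} (hm : 0 < m) :
    InfActionLE f (γ 0) (γ 1) (2 * agmonLength f γ 0 1 + 4 * ℓ * K ^ 2 / m) := by
  set a : ℕ → ℝ := fun k => k / m
  have hmR : (0 : ℝ) < m := Nat.cast_pos.2 hm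
  have hstep : ∀ i, a (i + 1) - a i = 1 / m := fun i => by simp only [a]; push_cast; ring
  have hpiece : ∀ i < m, InfActionLE f (γ (a i)) (γ (a (i + 1)))
      (2 * agmonLength f γ (a i) (a (i + 1)) + 4 * ℓ * K ^ 2 / m ^ 2) := fun i _ => by
    have hab : a i ≤ a (i + 1) := by linarith [hstep i, one_div_pos.2 hmR]
    refine (infActionLE_segment hl _ _).mono ?_
    have hcost := norm_sub_mul_le_agmonLength hl hγ hab
    rw [hstep, div_pow, one_pow] at hcost
    have h4 : 2 * (2 * ℓ * K ^ 2 * (1 / m ^ 2)) = 4 * ℓ * K ^ 2 / m ^ 2 := by ring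
    linarith
  have hsum : ∑ i ∈ Finset.range m, agmonLength f γ (a i) (a (i + 1)) = agmonLength f γ 0 1 := by
    rw [agmonLength, ← show a 0 = 0 by simp [a], ← show a m = 1 by simp [a, hmR.ne']]
    exact sum_integral_adjacent_intervals fun k _ =>
      intervalIntegrable_agmon_integrand hl.continuous hγ _ _
  have h := InfActionLE.sum_range hl.continuous hm hpiece
  rw [show a 0 = 0 by simp [a], show a m = 1 by simp [a, hmR.ne'], Finset.sum_add_distrib,
    ← Finset.mul_sum, hsum, Finset.sum_const, Finset.card_range, nsmul_eq_mul] at h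
  convert h using 2
  field_simp

theorem infActionLE_two_mul_agmonLength :
    InfActionLE f (γ 0) (γ 1) (2 * agmonLength f γ 0 1) := by
  refine InfActionLE.of_forall_pos fun ε hε => ?_
  obtain ⟨m, hm⟩ := exists_nat_gt (4 * ℓ * K ^ 2 / ε)
  have hmR : (0 : ℝ) < m := lt_of_le_of_lt (by positivity) hm
  refine (infActionLE_two_mul_agmonLength_add hl hγ (Nat.cast_pos.1 hmR)).mono ?_
  rw [div_lt_iff₀ hε] at hm
  have : 4 * ℓ * K ^ 2 / m ≤ ε := by rw [div_le_iff₀ hmR]; linarith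
  linarith

end Polygon

section Values

variable {E : Type*} [NormedAddCommGroup E] [InnerProductSpace ℝ E] [CompleteSpace E]
  {f : E → ℝ}

theorem actionValues_nonempty (f : E → ℝ) (x y : E) {t : ℝ} (ht : t ≠ 0) :
    (actionValues f x y t).Nonempty :=
  let ⟨γ, hγ, h0, ht⟩ := exists_lipschitz_path x y ht
  ⟨_, γ, hγ, h0, ht, rfl⟩

theorem agmonValues_nonempty (f : E → ℝ) (x y : E) : (agmonValues f x y).Nonempty :=
  let ⟨γ, hγ, h0, h1⟩ := exists_lipschitz_path x y one_ne_zero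
  ⟨_, γ, hγ, h0, h1, rfl⟩

theorem bddBelow_actionValues (f : E → ℝ) (x y : E) {t : ℝ} (ht : 0 ≤ t) :
    BddBelow (actionValues f x y t) :=
  ⟨0, by rintro _ ⟨γ, -, -, -, rfl⟩; exact action_nonneg f γ ht⟩

theorem bddBelow_agmonValues (f : E → ℝ) (x y : E) : BddBelow (agmonValues f x y) :=
  ⟨0, by rintro _ ⟨γ, -, -, -, rfl⟩; exact agmonLength_nonneg f γ zero_le_one⟩

theorem two_mul_sInf_agmonValues_le (hf : Continuous (gradient f)) (x y : E) {t : ℝ}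
    (ht : 0 < t) :
    2 * sInf (agmonValues f x y) ≤ sInf (actionValues f x y t) := by
  refine le_csInf (actionValues_nonempty f x y ht.ne') ?_
  rintro _ ⟨γ, ⟨K, hγ⟩, h0, hte, rfl⟩
  have hmem : agmonLength f (fun s => γ (t * s)) 0 1 ∈ agmonValues f x y :=
    ⟨_, ⟨_, hγ.comp (lipschitzWith_smul t)⟩, by simpa using h0, by simpa using hte, rfl⟩
  calc 2 * sInf (agmonValues f x y) ≤ 2 * agmonLength f (fun s => γ (t * s)) 0 1 := by
        gcongr; exact csInf_le (bddBelow_agmonValues f x y) hmem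
    _ = 2 * agmonLength f γ 0 t := by rw [agmonLength_comp_mul_left γ ht, mul_zero, mul_one]
    _ ≤ action f γ 0 t := two_mul_agmonLength_le_action hf hγ ht.le

theorem actionValues_subset (hf : Continuous (gradient f)) {x y : E} (hy : gradient f y = 0)
    {t₁ t₂ : ℝ} (h₀ : 0 ≤ t₁) (h : t₁ ≤ t₂) : actionValues f x y t₁ ⊆ actionValues f x y t₂ := by
  rintro _ ⟨γ, ⟨K, hγ⟩, h0, hte, rfl⟩
  obtain ⟨η, hη, hη0, hηt, hact⟩ := exists_action_eq_add_of_concat hf hγ (LipschitzWith.const y)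
    h₀ (sub_nonneg.2 h) hte
  have hrest : action f (fun _ => y) 0 (t₂ - t₁) = 0 := by simp [action, hy]
  rw [add_sub_cancel] at hηt hact
  exact ⟨η, hη, hη0.trans h0, hηt, by rw [hact, hrest, add_zero]⟩

theorem InfActionLE.exists_sInf_actionValues_le {x y : E} {c : ℝ} (h : InfActionLE f x y c) {δ : ℝ}
    (hδ : 0 < δ) : ∃ t > 0, sInf (actionValues f x y t) ≤ c + δ :=
  let ⟨t, ht, _, hI, hle⟩ := h δ hδ
  ⟨t, ht, (csInf_le (bddBelow_actionValues f x y ht.le) hI).trans hle⟩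

end Values

end Agmon

open Agmon

section Euclidean

variable {n : ℕ} {f : EuclideanSpace ℝ (Fin n) → ℝ} (x y : EuclideanSpace ℝ (Fin n))

theorem dA6_le_rho6 (hf : Continuous (gradient f)) {t : ℝ} (ht : 0 < t) :
    dA6 n f x y ≤ rho6 n f x y t := by
  have := two_mul_sInf_agmonValues_le hf x y ht
  change 1 / 2 * sInf (agmonValues f x y) ≤ 1 / 4 * sInf (actionValues f x y t)
  linarith

theorem isGLB_rho6_image {ℓ : ℝ≥0} (hl : LipschitzWith ℓ (gradient f)) :
    IsGLB (rho6 n f x y '' Ioi 0) (dA6 n f x y) := by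
  refine ⟨?_, fun b hb => ?_⟩
  · rintro _ ⟨t, ht, rfl⟩
    exact dA6_le_rho6 x y hl.continuous ht
  suffices ∀ I ∈ agmonValues f x y, 2 * b ≤ I by
    have := le_csInf (agmonValues_nonempty f x y) this
    change b ≤ 1 / 2 * sInf (agmonValues f x y)
    linarith
  rintro _ ⟨γ, ⟨K, hγ⟩, h0, h1, rfl⟩
  have h := infActionLE_two_mul_agmonLength hl hγ
  rw [h0, h1] at h
  refine le_of_forall_pos_le_add fun δ hδ => ?_
  obtain ⟨t, ht, hle⟩ := h.exists_sInf_actionValues_le (δ := 2 * δ) (by positivity)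
  have hbt : b ≤ 1 / 4 * sInf (actionValues f x y t) := hb ⟨t, ht, rfl⟩
  linarith

theorem rho6_antitoneOn (hf : Continuous (gradient f)) (hy : gradient f y = 0) :
    AntitoneOn (rho6 n f x y) (Ioi 0) := by
  intro t₁ ht₁ t₂ ht₂ h
  have := csInf_le_csInf (bddBelow_actionValues f x y (le_of_lt ht₂))
    (actionValues_nonempty f x y (ne_of_gt ht₁)) (actionValues_subset hf hy (le_of_lt ht₁) h)
  change 1 / 4 * sInf (actionValues f x y t₂) ≤ 1 / 4 * sInf (actionValues f x y t₁)
  linarith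

end Euclidean

theorem stmt6_general (n : ℕ) (f : EuclideanSpace ℝ (Fin n) → ℝ)
    (hlip : ∃ K, LipschitzWith K (gradient f))
    (x y : EuclideanSpace ℝ (Fin n)) :
    dA6 n f x y = sInf (rho6 n f x y '' Set.Ioi 0) ∧
    (gradient f y = 0 →
      AntitoneOn (rho6 n f x y) (Set.Ioi 0) ∧
      Filter.Tendsto (rho6 n f x y) Filter.atTop (nhds (dA6 n f x y))) := by
  obtain ⟨ℓ, hl⟩ := hlip
  have hglb := isGLB_rho6_image x y hl
  refine ⟨(hglb.csInf_eq ⟨_, 1, mem_Ioi.2 one_pos, rfl⟩).symm, fun hy => ?_⟩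
  have hanti := rho6_antitoneOn x y hl.continuous hy
  exact ⟨hanti, hanti.tendsto_atTop_of_isGLB hglb⟩

/-- Section A.3 (Euclidean form): `d_A(x,y) = inf_{t>0} ρ(x,y,t)`; if moreover
`∇f(y) = 0` then `t ↦ ρ(x,y,t)` is nonincreasing on `(0,∞)` and
`ρ(x,y,t) → d_A(x,y)` as `t → ∞`. -/
theorem stmt6 (n : ℕ) (f : EuclideanSpace ℝ (Fin n) → ℝ)
    (hf : ContDiff ℝ 1 f) (hbdd : ∃ C, ∀ z, ‖gradient f z‖ ≤ C)
    (hlip : ∃ K, LipschitzWith K (gradient f))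
    (x y : EuclideanSpace ℝ (Fin n)) :
    dA6 n f x y = sInf (rho6 n f x y '' Set.Ioi 0) ∧
    (gradient f y = 0 →
      AntitoneOn (rho6 n f x y) (Set.Ioi 0) ∧
      Filter.Tendsto (rho6 n f x y) Filter.atTop (nhds (dA6 n f x y))) :=
  stmt6_general n f hlip x y
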